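/- In a weighted graph where an optimal Graph Inspection solution exists, if T[v, S] is the minimum weight of a walk from s to v collecting color set S (over the shortest-path metric w'), then the optimal solution value for Graph Inspection with threshold t equals the minimum over all vertices v ≠ s and all color sets S of size t of T[v, S] + w'(v, s). -/

import Mathlib

open scoped ENNReal

/-!
Cut a closed walk at the first vertex `v` by which some `t`-set `S` of its colours has
been collected. Since `col s = ∅`, the vertex `v` carries a colour of `S` and so differs from `s`;
the prefix is an `s`–`v` walk collecting `S` and the suffix a `v`–`s` walk, so the walk weighs at
least `T v S + w' v s`. Conversely an `s`–`v` walk collecting `S` followed by a `v`–`s` walk is a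
closed walk collecting at least `t` colours.
-/

/-- Weight of a walk (ℝ≥0∞-valued): sum of weights of consecutive pairs. Non-edges may be
encoded by weight `⊤`. -/
noncomputable def walkWeightE {V : Type*} (w : V → V → ℝ≥0∞) : List V → ℝ≥0∞
  | [] => 0
  | [_] => 0
  | a :: b :: rest => w a b + walkWeightE w (b :: rest)

def collected {V C : Type*} [DecidableEq C] (col : V → Finset C) (p : List V) : Finset C :=
  p.foldr (fun v acc => col v ∪ acc) ∅

section Walks

variable {V C : Type*}

lemma walkWeightE_append_cons (w : V → V → ℝ≥0∞) (p : List V) (v : V) (q : List V) :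
    walkWeightE w (p ++ v :: q) = walkWeightE w (p ++ [v]) + walkWeightE w (v :: q) := by
  induction p with
  | nil => simp [walkWeightE]
  | cons a p ih =>
    cases p with
    | nil => simp [walkWeightE]
    | cons b p => simp only [List.cons_append, walkWeightE] at ih ⊢; rw [ih, add_assoc]

lemma collected_append [DecidableEq C] (col : V → Finset C) (p q : List V) :
    collected col (p ++ q) = collected col p ∪ collected col q := by
  induction p with
  | nil => simp [collected]
  | cons a p ih =>
    simp only [collected, List.cons_append, List.foldr_cons] at ih ⊢
    rw [ih, Finset.union_assoc]

lemma collected_singleton [DecidableEq C] (col : V → Finset C) (v : V) :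
    collected col [v] = col v := by
  simp [collected]

lemma exists_walk_concat [DecidableEq C] (w : V → V → ℝ≥0∞) (col : V → Finset C)
    {u v x : V} {p q : List V} (hpu : p.head? = some u) (hpv : p.getLast? = some v)
    (hqv : q.head? = some v) (hqx : q.getLast? = some x) :
    ∃ r : List V, r.head? = some u ∧ r.getLast? = some x ∧
      collected col p ⊆ collected col r ∧ walkWeightE w r = walkWeightE w p + walkWeightE w q := by
  obtain ⟨p, rfl⟩ := List.getLast?_eq_some_iff.mp hpv
  obtain ⟨q, rfl⟩ := List.head?_eq_some_iff.mp hqv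
  refine ⟨p ++ v :: q, ?_, ?_, ?_, walkWeightE_append_cons w p v q⟩
  · simpa [List.head?_append] using hpu
  · rwa [List.getLast?_append_cons]
  · simp only [collected_append, collected_singleton]
    exact Finset.union_subset_union_right (by simp [collected])

lemma exists_shortest_prefix (P : List V → Prop) (hnil : ¬ P []) :
    ∀ p : List V, P p → ∃ a v b, p = a ++ v :: b ∧ P (a ++ [v]) ∧ ¬ P a := by
  intro p
  induction p using List.reverseRecOn with
  | nil => exact fun h => absurd h hnil
  | append_singleton q x ih =>
    intro hqx
    by_cases hq : P q
    · obtain ⟨a, v, b, rfl, hav, ha⟩ := ih hq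
      exact ⟨a, v, b ++ [x], by simp, hav, ha⟩
    · exact ⟨q, x, [], by simp, hqx, hq⟩

end Walks

theorem stmt16_general {V C : Type*} [DecidableEq C]
    (w : V → V → ℝ≥0∞)
    (col : V → Finset C) (s : V) (hcols : col s = ∅)
    (t : ℕ) (ht : 1 ≤ t)
    (w' : V → V → ℝ≥0∞)
    (hw' : ∀ u v, w' u v = sInf {x | ∃ p : List V,
        p.head? = some u ∧ p.getLast? = some v ∧ walkWeightE w p = x})
    (T : V → Finset C → ℝ≥0∞)
    (hT : ∀ (v : V) (S : Finset C),
        T v S = sInf {x | ∃ p : List V, p.head? = some s ∧ p.getLast? = some v ∧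
          S ⊆ collected col p ∧ walkWeightE w p = x}) :
    sInf {x | ∃ p : List V, p.head? = some s ∧ p.getLast? = some s ∧
        t ≤ (collected col p).card ∧ walkWeightE w p = x}
      = ⨅ (v : V) (_ : v ≠ s) (S : Finset C) (_ : S.card = t), T v S + w' v s := by
  apply le_antisymm
  · refine le_iInf₂ fun v _ => le_iInf₂ fun S hS => ?_
    rw [hT, hw', ENNReal.sInf_add]
    refine le_iInf₂ fun _ ⟨p, hps, hpv, hSp, hp⟩ => ?_
    rw [ENNReal.add_sInf]
    refine le_iInf₂ fun _ ⟨q, hqv, hqs, hq⟩ => ?_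
    obtain ⟨r, hrs, hrs', hpr, hr⟩ := exists_walk_concat w col hps hpv hqv hqs
    refine sInf_le ⟨r, hrs, hrs', ?_, by rw [hr, hp, hq]⟩
    exact hS ▸ Finset.card_le_card (hSp.trans hpr)
  · refine le_sInf ?_
    rintro _ ⟨p, hps, hps', hcard, rfl⟩
    obtain ⟨S, hSp, hS⟩ := Finset.exists_subset_card_eq hcard
    have hSne : ¬ S ⊆ collected col [] := by
      rw [show collected col [] = ∅ from rfl, Finset.subset_empty, ← Finset.card_eq_zero]
      omega
    obtain ⟨a, v, b, rfl, hav, ha⟩ :=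
      exists_shortest_prefix (fun a => S ⊆ collected col a) hSne p hSp
    have hv : v ≠ s := by
      rintro rfl
      rw [collected_append, collected_singleton, hcols, Finset.union_empty] at hav
      exact ha hav
    have hTv : T v S ≤ walkWeightE w (a ++ [v]) :=
      (hT v S).le.trans
        (sInf_le ⟨a ++ [v], by simpa [List.head?_append] using hps, by simp, hav, rfl⟩)
    have hw'v : w' v s ≤ walkWeightE w (v :: b) :=
      (hw' v s).le.trans (sInf_le ⟨v :: b, rfl, by rwa [List.getLast?_append_cons] at hps', rfl⟩)
    calc ⨅ (v : V) (_ : v ≠ s) (S : Finset C) (_ : S.card = t), T v S + w' v s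
        ≤ T v S + w' v s := iInf₂_le_of_le v hv (iInf₂_le S hS)
      _ ≤ walkWeightE w (a ++ v :: b) := by
        rw [walkWeightE_append_cons]; exact add_le_add hTv hw'v

/-- if `T v S` is the minimum weight of an `s`-to-`v` walk collecting the color
set `S` (over the graph encoded by `w`, with shortest-path distance `w'`), then the optimal
value of Graph Inspection with threshold `t` equals the minimum over all `v ≠ s` and all
color sets `S` of size `t` of `T v S + w'(v, s)`. -/
theorem stmt16 {V C : Type*} [DecidableEq C]
    (w : V → V → ℝ≥0∞) (hwsymm : ∀ u v, w u v = w v u)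
    (col : V → Finset C) (s : V) (hcols : col s = ∅)
    (t : ℕ) (ht : 1 ≤ t)
    (htfeas : ∃ S : Finset C, S.card = t ∧ ∀ c ∈ S, ∃ v : V, c ∈ col v)
    (w' : V → V → ℝ≥0∞)
    (hw' : ∀ u v, w' u v = sInf {x | ∃ p : List V,
        p.head? = some u ∧ p.getLast? = some v ∧ walkWeightE w p = x})
    (hconn : ∀ u v, w' u v ≠ ⊤)
    (T : V → Finset C → ℝ≥0∞)
    (hT : ∀ (v : V) (S : Finset C),
        T v S = sInf {x | ∃ p : List V, p.head? = some s ∧ p.getLast? = some v ∧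
          S ⊆ collected col p ∧ walkWeightE w p = x}) :
    sInf {x | ∃ p : List V, p.head? = some s ∧ p.getLast? = some s ∧
        t ≤ (collected col p).card ∧ walkWeightE w p = x}
      = ⨅ (v : V) (_ : v ≠ s) (S : Finset C) (_ : S.card = t), T v S + w' v s :=
  stmt16_general w col s hcols t ht w' hw' T hT
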